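/- arXiv:1607.05447 — 2 statements merged into one kernel-verified Lean document; each statement's English description precedes it below -/
import Mathlib

section
/- Equality-constrained implicit differentiation: Let f : ℝ × ℝⁿ → ℝ be twice continuously differentiable, A an m×n real matrix of rank m, H = ∇²_{yy}f(x, y⋆) invertible with A H⁻¹ Aᵀ invertible, and suppose (y⋆(x), λ⋆(x)) are differentiable functions satisfying the stationarity conditions ∇_y f(x, y⋆(x)) + Aᵀλ⋆(x) = 0 and A y⋆(x) = b for all x. Then d y⋆/dx = (H⁻¹ Aᵀ (A H⁻¹ Aᵀ)⁻¹ A H⁻¹ - H⁻¹) · f_{XY}(x, y⋆(x)), where f_{XY} = ∂/∂x ∇_y f. -/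
/-!
Differentiating the two optimality conditions along `x` gives the linear KKT system
`f_XY + H y' + Aᵀ λ' = 0`, `A y' = 0` for `y' = dy⋆/dx` and `λ' = dλ⋆/dx`; the chain rule supplies
the mixed partial `f_XY` and the Hessian `H`. Eliminating `y' = -H⁻¹ (f_XY + Aᵀ λ')` from the
second equation gives `λ' = -(A H⁻¹ Aᵀ)⁻¹ A H⁻¹ f_XY`, and substituting back yields the formula.
-/

open Matrix Function ContinuousLinearMap

theorem Matrix.eq_of_kkt {R m n : Type*} [CommRing R] [Fintype m] [Fintype n] [DecidableEq m]
    [DecidableEq n] {H : Matrix n n R} {A : Matrix m n R} (hH : IsUnit H.det)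
    (hS : IsUnit (A * H⁻¹ * Aᵀ).det) {c y : n → R} {l : m → R}
    (hstat : c + H *ᵥ y + Aᵀ *ᵥ l = 0) (hfeas : A *ᵥ y = 0) :
    y = (H⁻¹ * Aᵀ * (A * H⁻¹ * Aᵀ)⁻¹ * A * H⁻¹ - H⁻¹) *ᵥ c := by
  have hy : y = -(H⁻¹ *ᵥ c) - (H⁻¹ * Aᵀ) *ᵥ l := by
    have := congrArg (H⁻¹ *ᵥ ·) hstat
    simp only [mulVec_add, mulVec_mulVec, nonsing_inv_mul H hH, one_mulVec, mulVec_zero] at this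
    linear_combination this
  have hl : l = -((A * H⁻¹ * Aᵀ)⁻¹ * A * H⁻¹) *ᵥ c := by
    have h := congrArg (fun v => (A * H⁻¹ * Aᵀ)⁻¹ *ᵥ (A *ᵥ v)) hy
    simp only [hfeas, mulVec_zero, mulVec_sub, mulVec_neg, mulVec_mulVec, ← Matrix.mul_assoc,
      nonsing_inv_mul _ hS, one_mulVec] at h
    rw [neg_mulVec]; linear_combination h
  rw [hy, hl]
  simp only [neg_mulVec, mulVec_neg, sub_mulVec, mulVec_mulVec, Matrix.mul_assoc]
  abel

theorem Matrix.mulVec_eq_of_forall_apply_single {R m n : Type*} [CommSemiring R] [Fintype n]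
    [DecidableEq n] {M : Matrix m n R} {L : (n → R) →ₗ[R] m → R}
    (h : ∀ i j, M i j = L (Pi.single j 1) i) (v : n → R) : M *ᵥ v = L v := by
  have hM : M = LinearMap.toMatrix' L := by
    ext i j
    rw [LinearMap.toMatrix'_apply, h]
  rw [hM, LinearMap.toMatrix'_mulVec]

theorem HasDerivAt.matrix_mulVec {𝕜 m n : Type*} [NontriviallyNormedField 𝕜] [Fintype m]
    [Fintype n] (M : Matrix m n 𝕜) {y : 𝕜 → n → 𝕜} {y' : n → 𝕜} {x : 𝕜}
    (hy : HasDerivAt y y' x) : HasDerivAt (fun t => M *ᵥ y t) (M *ᵥ y') x := by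
  refine hasDerivAt_pi.2 fun i => ?_
  simp only [mulVec, dotProduct]
  exact .fun_sum fun j _ => (hasDerivAt_pi.1 hy j).const_mul (M i j)

section PartialDerivatives

variable {𝕜 X E G : Type*} [NontriviallyNormedField 𝕜] [NormedAddCommGroup X] [NormedSpace 𝕜 X]
  [NormedAddCommGroup E] [NormedSpace 𝕜 E] [NormedAddCommGroup G] [NormedSpace 𝕜 G]
  {f : X → E → G} {x : X} {y : E}

theorem HasFDerivAt.uncurry_right {D : X × E →L[𝕜] G} (hf : HasFDerivAt (uncurry f) D (x, y)) :
    HasFDerivAt (f x) (D.comp (inr 𝕜 X E)) y :=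
  hf.comp y (hasFDerivAt_prodMk_right x y)

theorem HasFDerivAt.uncurry_left {D : X × E →L[𝕜] G} (hf : HasFDerivAt (uncurry f) D (x, y)) :
    HasFDerivAt (fun t => f t y) (D.comp (inl 𝕜 X E)) x :=
  HasFDerivAt.comp (f := fun t : X => (t, y)) x hf (hasFDerivAt_prodMk_left x y)

theorem differentiable_uncurry_fderiv_apply (hf : ContDiff 𝕜 2 (uncurry f)) (v : E) :
    Differentiable 𝕜 (uncurry fun t y => fderiv 𝕜 (f t) y v) := by
  have hd : Differentiable 𝕜 (uncurry f) := hf.differentiable (by norm_num)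
  have hpartial : (uncurry fun t y => fderiv 𝕜 (f t) y v) =
      fun p => fderiv 𝕜 (uncurry f) p (0, v) := by
    ext ⟨t, y⟩
    simp [(hd (t, y)).hasFDerivAt.uncurry_right.fderiv]
  rw [hpartial]
  exact ((hf.fderiv_right le_rfl).differentiable one_ne_zero).clm_apply (differentiable_const _)

theorem hasDerivAt_uncurry_comp {f : 𝕜 → E → G} {y : 𝕜 → E} {x : 𝕜} {y' : E}
    (hf : DifferentiableAt 𝕜 (uncurry f) (x, y x)) (hy : HasDerivAt y y' x) :
    HasDerivAt (fun t => f t (y t)) (deriv (fun t => f t (y x)) x + fderiv 𝕜 (f x) (y x) y') x := by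
  have hD := hf.hasFDerivAt
  have hgraph : HasDerivAt (fun t => (t, y t)) (1, y') x := (hasDerivAt_id x).prodMk hy
  rw [hD.uncurry_right.fderiv, hD.uncurry_left.hasDerivAt.deriv]
  refine (hD.comp_hasDerivAt x hgraph).congr_deriv ?_
  simp only [coe_comp, Function.comp_apply, inl_apply, inr_apply, ← map_add, Prod.mk_add_mk,
    add_zero, zero_add]

end PartialDerivatives

theorem stmt_10_general (n m : ℕ) (f : ℝ → (Fin n → ℝ) → ℝ)
    (hf : ContDiff ℝ 2 (Function.uncurry f))
    (A : Matrix (Fin m) (Fin n) ℝ) (b : Fin m → ℝ)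
    (ystar : ℝ → Fin n → ℝ) (lstar : ℝ → Fin m → ℝ)
    (hy : Differentiable ℝ ystar) (hl : Differentiable ℝ lstar)
    (hstat : ∀ x, (fun i => fderiv ℝ (f x) (ystar x) (Pi.single i 1)) +
      Matrix.mulVec Aᵀ (lstar x) = 0)
    (hfeas : ∀ x, A.mulVec (ystar x) = b) (x : ℝ)
    (H : Matrix (Fin n) (Fin n) ℝ)
    (hH : ∀ i j, H i j =
      fderiv ℝ (fun y => fderiv ℝ (f x) y (Pi.single i 1)) (ystar x) (Pi.single j 1))
    (hHinv : IsUnit H.det) (hSinv : IsUnit (A * H⁻¹ * Aᵀ).det) :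
    deriv ystar x =
      (H⁻¹ * Aᵀ * (A * H⁻¹ * Aᵀ)⁻¹ * A * H⁻¹ - H⁻¹).mulVec
        (fun i => deriv (fun x' => fderiv ℝ (f x') (ystar x) (Pi.single i 1)) x) := by
  set grad : ℝ → (Fin n → ℝ) → Fin n → ℝ := fun t y i => fderiv ℝ (f t) y (Pi.single i 1)
  have hgrad_coord (i : Fin n) := differentiable_uncurry_fderiv_apply hf (Pi.single i 1)
  have hgrad : Differentiable ℝ (uncurry grad) := differentiable_pi.2 hgrad_coord
  have hstat' : deriv (fun t => grad t (ystar x)) x + fderiv ℝ (grad x) (ystar x) (deriv ystar x)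
      + Aᵀ *ᵥ deriv lstar x = 0 := by
    have hderiv := (hasDerivAt_uncurry_comp (hgrad _) (hy x).hasDerivAt).fun_add
      ((hl x).hasDerivAt.matrix_mulVec Aᵀ)
    rw [show (fun t => grad t (ystar t) + Aᵀ *ᵥ lstar t) = fun _ => 0 from funext hstat] at hderiv
    exact hderiv.unique (hasDerivAt_const x 0)
  have hfeas' : A *ᵥ deriv ystar x = 0 := by
    have hderiv := (hy x).hasDerivAt.matrix_mulVec A
    rw [show (fun t => A *ᵥ ystar t) = fun _ => b from funext hfeas] at hderiv
    exact hderiv.unique (hasDerivAt_const x b)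
  have hcross : deriv (fun t => grad t (ystar x)) x =
      fun i => deriv (fun t => fderiv ℝ (f t) (ystar x) (Pi.single i 1)) x :=
    deriv_pi fun i => (hgrad_coord i _).hasFDerivAt.uncurry_left.differentiableAt
  have hHess (v : Fin n → ℝ) : H *ᵥ v = fderiv ℝ (grad x) (ystar x) v :=
    mulVec_eq_of_forall_apply_single (M := H)
      (L := (fderiv ℝ (grad x) (ystar x) : (Fin n → ℝ) →ₗ[ℝ] _))
      (fun i j => by
        rw [hH, ContinuousLinearMap.coe_coe,
          fderiv_apply (hgrad _).hasFDerivAt.uncurry_right.differentiableAt]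
        rfl) v
  rw [hcross, ← hHess] at hstat'
  exact eq_of_kkt hHinv hSinv hstat' hfeas'

theorem stmt_10 (n m : ℕ) (f : ℝ → (Fin n → ℝ) → ℝ)
    (hf : ContDiff ℝ 2 (Function.uncurry f))
    (A : Matrix (Fin m) (Fin n) ℝ) (hrank : A.rank = m) (b : Fin m → ℝ)
    (ystar : ℝ → Fin n → ℝ) (lstar : ℝ → Fin m → ℝ)
    (hy : Differentiable ℝ ystar) (hl : Differentiable ℝ lstar)
    (hstat : ∀ x, (fun i => fderiv ℝ (f x) (ystar x) (Pi.single i 1)) +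
      Matrix.mulVec Aᵀ (lstar x) = 0)
    (hfeas : ∀ x, A.mulVec (ystar x) = b) (x : ℝ)
    (H : Matrix (Fin n) (Fin n) ℝ)
    (hH : ∀ i j, H i j =
      fderiv ℝ (fun y => fderiv ℝ (f x) y (Pi.single i 1)) (ystar x) (Pi.single j 1))
    (hHinv : IsUnit H.det) (hSinv : IsUnit (A * H⁻¹ * Aᵀ).det) :
    deriv ystar x =
      (H⁻¹ * Aᵀ * (A * H⁻¹ * Aᵀ)⁻¹ * A * H⁻¹ - H⁻¹).mulVec
        (fun i => deriv (fun x' => fderiv ℝ (f x') (ystar x) (Pi.single i 1)) x) :=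
  stmt_10_general n m f hf A b ystar lstar hy hl hstat hfeas x H hH hHinv hSinv
end

section
/- Null-space parameterization: Let f : ℝ × ℝⁿ → ℝ be twice continuously differentiable, F an n×k matrix whose columns span the null space of A, y₀ with A y₀ = b, and z⋆ : ℝ → ℝᵏ differentiable with Fᵀ∇_y f(x, y₀ + F z⋆(x)) = 0 for all x. If Fᵀ H F is invertible where H = ∇²_{yy}f(x, g(x)) and g(x) = y₀ + F z⋆(x), then g'(x) = -F (Fᵀ H F)⁻¹ Fᵀ f_{XY}(x, g(x)). -/
/-!
Differentiating the stationarity condition `Fᵀ ∇_y f(x, g x) = 0` in `x` by the chain rule gives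
`Fᵀ (f_{XY}(x, g x) + H g'(x)) = 0`. Since `g' = F z⋆'`, this is the linear system
`(Fᵀ H F) z⋆' = -Fᵀ f_{XY}(x, g x)`, which is solved by inverting `Fᵀ H F`.
-/

open Matrix Function

section PartialDerivatives

variable {𝕜 E G : Type*} [NontriviallyNormedField 𝕜]
  [NormedAddCommGroup E] [NormedSpace 𝕜 E] [NormedAddCommGroup G] [NormedSpace 𝕜 G]

theorem fderiv_eq_fderiv_uncurry_comp_inr {Φ : 𝕜 → E → G} {t : 𝕜} {y : E}
    (h : DifferentiableAt 𝕜 (uncurry Φ) (t, y)) :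
    fderiv 𝕜 (Φ t) y = (fderiv 𝕜 (uncurry Φ) (t, y)).comp (.inr 𝕜 𝕜 E) :=
  (h.hasFDerivAt.comp y (hasFDerivAt_prodMk_right t y)).fderiv

theorem deriv_eq_fderiv_uncurry_apply_inl {Φ : 𝕜 → E → G} {t : 𝕜} {y : E}
    (h : DifferentiableAt 𝕜 (uncurry Φ) (t, y)) :
    deriv (fun s => Φ s y) t = fderiv 𝕜 (uncurry Φ) (t, y) (1, 0) := by
  have hline := h.hasFDerivAt.comp_hasDerivAt t ((hasDerivAt_id t).prodMk (hasDerivAt_const t y))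
  exact hline.deriv

theorem hasDerivAt_uncurry_comp_prodMk {Φ : 𝕜 → E → G} {γ : 𝕜 → E} {v : E} {t : 𝕜}
    (hΦ : DifferentiableAt 𝕜 (uncurry Φ) (t, γ t)) (hγ : HasDerivAt γ v t) :
    HasDerivAt (fun s => Φ s (γ s))
      (deriv (fun s => Φ s (γ t)) t + fderiv 𝕜 (Φ t) (γ t) v) t := by
  have hcurve := hΦ.hasFDerivAt.comp_hasDerivAt t ((hasDerivAt_id t).prodMk hγ)
  rw [deriv_eq_fderiv_uncurry_apply_inl hΦ, fderiv_eq_fderiv_uncurry_comp_inr hΦ,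
    ContinuousLinearMap.comp_apply, ContinuousLinearMap.inr_apply, ← map_add, Prod.mk_add_mk,
    add_zero, zero_add]
  exact hcurve

end PartialDerivatives

section Coordinates

variable {𝕜 ι κ : Type*} [NontriviallyNormedField 𝕜] [Fintype ι]

theorem HasDerivAt.matrix_mulVec_s12 [CompleteSpace 𝕜] [Fintype κ] (M : Matrix κ ι 𝕜)
    {φ : 𝕜 → ι → 𝕜} {φ' : ι → 𝕜} {t : 𝕜} (hφ : HasDerivAt φ φ' t) :
    HasDerivAt (fun s => M *ᵥ φ s) (M *ᵥ φ') t :=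
  M.mulVecLin.toContinuousLinearMap.hasFDerivAt.comp_hasDerivAt t hφ

theorem fderiv_apply_eq_mulVec [DecidableEq ι] {φ : (ι → 𝕜) → κ → 𝕜} {y : ι → 𝕜}
    (h : DifferentiableAt 𝕜 φ y) (v : ι → 𝕜) :
    fderiv 𝕜 φ y v = Matrix.of (fun i j => fderiv 𝕜 (fun y => φ y i) y (Pi.single j 1)) *ᵥ v :=
  calc fderiv 𝕜 φ y v = LinearMap.toMatrix' (fderiv 𝕜 φ y : (ι → 𝕜) →ₗ[𝕜] κ → 𝕜) *ᵥ v :=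
        (LinearMap.toMatrix'_mulVec _ v).symm
    _ = _ := by
      congr 1
      ext i j
      rw [LinearMap.toMatrix'_apply, Matrix.of_apply, (hasFDerivAt_pi'.1 h.hasFDerivAt i).fderiv]
      rfl

variable [DecidableEq ι]

/-- `partialGrad f t y = ∇_y f(t, y)`, in coordinates. -/
noncomputable def partialGrad (f : 𝕜 → (ι → 𝕜) → 𝕜) (t : 𝕜) (y : ι → 𝕜) : ι → 𝕜 :=
  fun i => fderiv 𝕜 (f t) y (Pi.single i 1)

theorem contDiff_uncurry_partialGrad {f : 𝕜 → (ι → 𝕜) → 𝕜} (hf : ContDiff 𝕜 2 (uncurry f)) :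
    ContDiff 𝕜 1 (uncurry (partialGrad f)) := by
  have hdiff : Differentiable 𝕜 (uncurry f) := hf.differentiable (by norm_num)
  have heq : uncurry (partialGrad f) =
      fun p i => fderiv 𝕜 (uncurry f) p (0, Pi.single i 1) := by
    ext ⟨t, y⟩ i
    simp [partialGrad, fderiv_eq_fderiv_uncurry_comp_inr (hdiff (t, y))]
  rw [heq]
  exact contDiff_pi.2 fun i => (hf.fderiv_right le_rfl).clm_apply contDiff_const

end Coordinates

theorem Matrix.eq_neg_inv_mulVec_of_transpose_mulVec_eq_zero {R ι κ : Type*} [CommRing R]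
    [Fintype ι] [Fintype κ] [DecidableEq κ] {F : Matrix ι κ R} {H : Matrix ι ι R}
    {m : ι → R} {z : κ → R} (hinv : IsUnit (Fᵀ * H * F).det)
    (h : Fᵀ *ᵥ (m + H *ᵥ (F *ᵥ z)) = 0) :
    z = -((Fᵀ * H * F)⁻¹ *ᵥ (Fᵀ *ᵥ m)) := by
  have hz : (Fᵀ * H * F) *ᵥ z = -(Fᵀ *ᵥ m) := by
    rw [mulVec_add, mulVec_mulVec, mulVec_mulVec] at h
    linear_combination (norm := module) h
  rw [← mulVec_neg, ← hz, mulVec_mulVec, nonsing_inv_mul _ hinv, one_mulVec]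

theorem stmt_12_general (n k : ℕ) (f : ℝ → (Fin n → ℝ) → ℝ)
    (hf : ContDiff ℝ 2 (Function.uncurry f))
    (F : Matrix (Fin n) (Fin k) ℝ)
    (y₀ : Fin n → ℝ)
    (zstar : ℝ → Fin k → ℝ) (hz : Differentiable ℝ zstar)
    (g : ℝ → Fin n → ℝ) (hg : ∀ x, g x = y₀ + F.mulVec (zstar x))
    (hstat : ∀ x, Matrix.mulVec Fᵀ
      (fun i => fderiv ℝ (f x) (g x) (Pi.single i 1)) = 0)
    (x : ℝ) (H : Matrix (Fin n) (Fin n) ℝ)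
    (hH : ∀ i j, H i j =
      fderiv ℝ (fun y => fderiv ℝ (f x) y (Pi.single i 1)) (g x) (Pi.single j 1))
    (hinv : IsUnit (Fᵀ * H * F).det) :
    deriv g x = -(F.mulVec ((Fᵀ * H * F)⁻¹.mulVec (Matrix.mulVec Fᵀ
      (fun i => deriv (fun x' => fderiv ℝ (f x') (g x) (Pi.single i 1)) x)))) := by
  have hΦ : Differentiable ℝ (uncurry (partialGrad f)) :=
    (contDiff_uncurry_partialGrad hf).differentiable one_ne_zero
  have hg' : HasDerivAt g (F *ᵥ deriv zstar x) x := by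
    rw [funext hg]
    exact ((hz x).hasDerivAt.matrix_mulVec_s12 F).const_add y₀
  have hH' : H = Matrix.of fun i j =>
      fderiv ℝ (fun y => partialGrad f x y i) (g x) (Pi.single j 1) :=
    Matrix.ext hH
  have hslice : DifferentiableAt ℝ (partialGrad f x) (g x) :=
    (hΦ (x, g x)).comp (g x) (differentiableAt_const x |>.prodMk differentiableAt_id)
  have hline : DifferentiableAt ℝ (fun s => partialGrad f s (g x)) x := by
    have h := (hΦ (x, g x)).comp x
      ((differentiableAt_id : DifferentiableAt ℝ id x).prodMk (differentiableAt_const (g x)))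
    exact h
  have hcrit : Fᵀ *ᵥ (deriv (fun s => partialGrad f s (g x)) x +
      H *ᵥ (F *ᵥ deriv zstar x)) = 0 := by
    have hchain := (hasDerivAt_uncurry_comp_prodMk (hΦ (x, g x)) hg').matrix_mulVec_s12 Fᵀ
    rw [fderiv_apply_eq_mulVec hslice, ← hH'] at hchain
    have hzero : (fun s => Fᵀ *ᵥ partialGrad f s (g s)) = fun _ => 0 := funext hstat
    rw [hzero] at hchain
    exact hchain.unique (hasDerivAt_const x 0)
  rw [hg'.deriv, Matrix.eq_neg_inv_mulVec_of_transpose_mulVec_eq_zero hinv hcrit,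
    deriv_pi (differentiableAt_pi.1 hline), mulVec_neg]
  rfl

theorem stmt_12 (n m k : ℕ) (f : ℝ → (Fin n → ℝ) → ℝ)
    (hf : ContDiff ℝ 2 (Function.uncurry f))
    (A : Matrix (Fin m) (Fin n) ℝ) (F : Matrix (Fin n) (Fin k) ℝ)
    (hspan : LinearMap.range F.mulVecLin = LinearMap.ker A.mulVecLin)
    (b : Fin m → ℝ) (y₀ : Fin n → ℝ) (hy₀ : A.mulVec y₀ = b)
    (zstar : ℝ → Fin k → ℝ) (hz : Differentiable ℝ zstar)
    (g : ℝ → Fin n → ℝ) (hg : ∀ x, g x = y₀ + F.mulVec (zstar x))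
    (hstat : ∀ x, Matrix.mulVec Fᵀ
      (fun i => fderiv ℝ (f x) (g x) (Pi.single i 1)) = 0)
    (x : ℝ) (H : Matrix (Fin n) (Fin n) ℝ)
    (hH : ∀ i j, H i j =
      fderiv ℝ (fun y => fderiv ℝ (f x) y (Pi.single i 1)) (g x) (Pi.single j 1))
    (hinv : IsUnit (Fᵀ * H * F).det) :
    deriv g x = -(F.mulVec ((Fᵀ * H * F)⁻¹.mulVec (Matrix.mulVec Fᵀ
      (fun i => deriv (fun x' => fderiv ℝ (f x') (g x) (Pi.single i 1)) x)))) :=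
  stmt_12_general n k f hf F y₀ zstar hz g hg hstat x H hH hinv
end
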